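/- arXiv:2403.04543 — 2 statements merged into one kernel-verified Lean document; each statement's English description precedes it below -/
import Mathlib

section
/- For all real numbers x, y ≥ 0 and any bounded continuous function f : ℝ → ℝ, we have ∫₀^∞ [(x−a)⁺ − (y−a)⁺ − 1_{y>a}(x−y)] f(a) da = (x−y)² σ(f;x,y), where σ(f;x,y) = ∫₀¹∫₀¹ α f(αβ(x−y)+y) dα dβ. -/
/-!
Away from `[min x y, max x y)` the kernel vanishes, and on it equals `±(x - a)`, so the left side
is the Taylor remainder `∫ a in y..x, (x - a) * f a`. Rescaling `a = y + s (x - y)` turns this into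
`(x - y)² ∫₀¹ (1 - s) φ s` with `φ s = f (s (x - y) + y)`. On the other side, after exchanging the
order of integration, the substitution `s = α β` in the inner `β`-integral gives
`∫₀¹ ∫₀^α φ`, which is `∫₀¹ (1 - s) φ s` by parts.
-/

open MeasureTheory Set intervalIntegral

lemma integral_Icc_eq_intervalIntegral {g : ℝ → ℝ} {a b : ℝ} (hab : a ≤ b) :
    ∫ t in Icc a b, g t = ∫ t in a..b, g t := by
  rw [integral_Icc_eq_integral_Ioc, integral_of_le hab]

lemma integral_indicator_Ico_sub_indicator_Ico {g : ℝ → ℝ} (hg : LocallyIntegrable g)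
    (x y : ℝ) :
    ∫ a, ((Ico y x).indicator g a - (Ico x y).indicator g a) = ∫ a in y..x, g a := by
  have hint : ∀ b c : ℝ, Integrable ((Ico b c).indicator g) := fun b c =>
    (integrable_indicator_iff measurableSet_Ico).2
      ((hg.integrableOn_isCompact isCompact_Icc).mono_set Ico_subset_Icc_self)
  rw [integral_sub (hint y x) (hint x y), MeasureTheory.integral_indicator measurableSet_Ico,
    MeasureTheory.integral_indicator measurableSet_Ico, intervalIntegral,
    integral_Ico_eq_integral_Ioo, integral_Ico_eq_integral_Ioo, integral_Ioc_eq_integral_Ioo,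
    integral_Ioc_eq_integral_Ioo]

lemma integral_mul_comp_mul_zero_one (φ : ℝ → ℝ) (c : ℝ) :
    ∫ t in (0:ℝ)..1, c * φ (c * t) = ∫ s in (0:ℝ)..c, φ s := by
  rw [intervalIntegral.integral_const_mul, mul_integral_comp_mul_left, mul_zero, mul_one]

lemma integral_integral_eq_integral_sub_mul {φ : ℝ → ℝ} (hφ : Continuous φ) (a b : ℝ) :
    ∫ t in a..b, ∫ s in a..t, φ s = ∫ s in a..b, (b - s) * φ s := by
  have hparts := integral_mul_deriv_eq_deriv_mul (a := a) (b := b)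
    (u := fun t => ∫ s in a..t, φ s) (u' := φ) (v := fun t => t - b) (v' := fun _ => 1)
    (fun t _ => (hφ.integral_hasStrictDerivAt a t).hasDerivAt)
    (fun t _ => (hasDerivAt_id t).sub_const b)
    (hφ.intervalIntegrable a b) intervalIntegrable_const
  simp only [mul_one, sub_self, mul_zero, integral_same, zero_mul, zero_sub] at hparts
  rw [hparts, ← intervalIntegral.integral_neg]
  congr 1 with s
  ring

lemma max_sub_max_sub_ite_eq_indicator_sub_indicator (x y a : ℝ) :
    max (x - a) 0 - max (y - a) 0 - (if a < y then x - y else 0)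
      = (Ico y x).indicator (fun a => x - a) a - (Ico x y).indicator (fun a => x - a) a := by
  simp only [indicator, mem_Ico]
  grind

lemma setIntegral_Ioi_max_sub_max_sub_ite_mul {x y : ℝ} (hx : 0 ≤ x) (hy : 0 ≤ y)
    {g : ℝ → ℝ} (hg : Continuous g) :
    ∫ a in Ioi (0:ℝ), (max (x - a) 0 - max (y - a) 0 - (if a < y then x - y else 0)) * g a
      = ∫ a in y..x, (x - a) * g a := by
  have hkernel : ∀ a, (max (x - a) 0 - max (y - a) 0 - (if a < y then x - y else 0)) * g a
      = (Ico y x).indicator (fun a => (x - a) * g a) a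
        - (Ico x y).indicator (fun a => (x - a) * g a) a := fun a => by
    rw [max_sub_max_sub_ite_eq_indicator_sub_indicator, sub_mul, indicator_mul_left,
      indicator_mul_left]
  have hsupp : ∀ a ∉ Ici (0:ℝ),
      (max (x - a) 0 - max (y - a) 0 - (if a < y then x - y else 0)) * g a = 0 := by
    intro a ha
    rw [notMem_Ici] at ha
    rw [hkernel, indicator_of_notMem (fun h => by linarith [h.1]),
      indicator_of_notMem (fun h => by linarith [h.1]), sub_zero]
  rw [← integral_Ici_eq_integral_Ioi, setIntegral_eq_integral_of_forall_compl_eq_zero hsupp,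
    ← integral_indicator_Ico_sub_indicator_Ico (Continuous.locallyIntegrable (by fun_prop)) x y]
  simp_rw [hkernel]

lemma integral_sub_mul_eq_sq_mul_integral_unitInterval (g : ℝ → ℝ) (x y : ℝ) :
    ∫ a in y..x, (x - a) * g a
      = (x - y) ^ 2 * ∫ s in (0:ℝ)..1, (1 - s) * g (s * (x - y) + y) := by
  have h := mul_integral_comp_mul_add (f := fun a => (x - a) * g a) (a := 0) (b := 1) (x - y) y
  rw [mul_zero, mul_one, zero_add, sub_add_cancel] at h
  have hrescale : ∀ s, (x - ((x - y) * s + y)) * g ((x - y) * s + y)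
      = (x - y) * ((1 - s) * g (s * (x - y) + y)) := fun s => by ring_nf
  simp_rw [← h, hrescale, intervalIntegral.integral_const_mul]
  ring

lemma integral_integral_mul_comp_mul {φ : ℝ → ℝ} (hφ : Continuous φ) :
    ∫ β in (0:ℝ)..1, ∫ α in (0:ℝ)..1, α * φ (α * β) = ∫ s in (0:ℝ)..1, (1 - s) * φ s := by
  have hint : IntegrableOn (Function.uncurry fun β α => α * φ (α * β))
      (uIoc 0 1 ×ˢ uIoc 0 1) := by
    refine ((Continuous.continuousOn (by fun_prop)).integrableOn_compact
      ((isCompact_Icc (a := (0:ℝ)) (b := 1)).prod (isCompact_Icc (a := (0:ℝ)) (b := 1)))).mono_set ?_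
    rw [uIoc_of_le zero_le_one]
    exact prod_mono Ioc_subset_Icc_self Ioc_subset_Icc_self
  rw [intervalIntegral_intervalIntegral_swap hint, ← integral_integral_eq_integral_sub_mul hφ]
  simp_rw [integral_mul_comp_mul_zero_one]

theorem stmt0_general (x y : ℝ) (hx : 0 ≤ x) (hy : 0 ≤ y) (f : ℝ → ℝ)
    (hf : Continuous f) :
    ∫ a in Set.Ioi (0:ℝ),
        (max (x - a) 0 - max (y - a) 0 - (if a < y then x - y else 0)) * f a
      = (x - y) ^ 2 *
        ∫ β in Set.Icc (0:ℝ) 1, ∫ α in Set.Icc (0:ℝ) 1,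
          α * f (α * β * (x - y) + y) := by
  have hφ : Continuous fun s => f (s * (x - y) + y) := by fun_prop
  simp_rw [integral_Icc_eq_intervalIntegral (zero_le_one' ℝ)]
  rw [setIntegral_Ioi_max_sub_max_sub_ite_mul hx hy hf,
    integral_sub_mul_eq_sq_mul_integral_unitInterval, ← integral_integral_mul_comp_mul hφ]

theorem stmt0 (x y : ℝ) (hx : 0 ≤ x) (hy : 0 ≤ y) (f : ℝ → ℝ)
    (hf : Continuous f) (hfb : ∃ C, ∀ a, |f a| ≤ C) :
    ∫ a in Set.Ioi (0:ℝ),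
        (max (x - a) 0 - max (y - a) 0 - (if a < y then x - y else 0)) * f a
      = (x - y) ^ 2 *
        ∫ β in Set.Icc (0:ℝ) 1, ∫ α in Set.Icc (0:ℝ) 1,
          α * f (α * β * (x - y) + y) :=
  stmt0_general x y hx hy f hf
end

section
/- Fix n ≥ 1 and let S_n(z) = max(min(z,2n), n) for z ≥ 0, and let f_n = 1_{[n,2n]}. Then for all x, y ≥ 0, (x−y)² σ(f_n; x, y) = (1/2)(S_n(x) − S_n(y))(2x − S_n(x) − S_n(y)), where σ(f;x,y) = ∫₀¹∫₀¹ α f(αβ(x−y)+y) dα dβ. -/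
/-!
With `c = x - y`, the inner integral over `β` is a difference quotient of a primitive `F`
of `f`: `∫₀¹ α f(αβc + y) dβ = (F(y + αc) - F(y)) / c`, hence
`(x - y)² σ(f; x, y) = ∫_y^x (F u - F y) du`. For `f = 1_[n, 2n]` the primitive is `S_n`, and
`u ↦ (u² - (u - S_n u)²) / 2` is an antiderivative of `S_n`: `(u - S_n u)²` is the squared
distance from `u` to `[n, 2n]`, a `C¹` function with derivative `2 (u - S_n u)`.
-/

open MeasureTheory Set

def clamp (l h z : ℝ) : ℝ := max (min z h) l

noncomputable def sigma (f : ℝ → ℝ) (x y : ℝ) : ℝ :=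
  ∫ β in Icc (0:ℝ) 1, ∫ α in Icc (0:ℝ) 1, α * f (α * β * (x - y) + y)

lemma continuous_clamp (l h : ℝ) : Continuous (clamp l h) :=
  (continuous_id.min continuous_const).max continuous_const

lemma integral_Icc_zero_one_comp_mul_add (g : ℝ → ℝ) {t : ℝ} (ht : t ≠ 0) (y : ℝ) :
    ∫ s in Icc (0:ℝ) 1, g (t * s + y) = t⁻¹ * ∫ u in y..t + y, g u := by
  rw [integral_Icc_eq_integral_Ioc, ← intervalIntegral.integral_of_le zero_le_one,
    intervalIntegral.integral_comp_mul_add g ht, mul_zero, zero_add, mul_one, smul_eq_mul]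

theorem sq_mul_sigma_eq_integral_sub {f F : ℝ → ℝ} {C : ℝ} (hf : Measurable f)
    (hfC : ∀ u, ‖f u‖ ≤ C) (hFf : ∀ a b, ∫ u in a..b, f u = F b - F a)
    (x y : ℝ) : (x - y) ^ 2 * sigma f x y = ∫ u in y..x, (F u - F y) := by
  rcases eq_or_ne x y with rfl | hxy
  · simp
  set c := x - y
  have hc : c ≠ 0 := sub_ne_zero.mpr hxy
  have hint : Integrable (Function.uncurry fun β α : ℝ => α * f (α * β * c + y))
      ((volume.restrict (Icc (0:ℝ) 1)).prod (volume.restrict (Icc (0:ℝ) 1))) := by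
    refine Integrable.of_bound (by fun_prop) C ?_
    rw [Measure.prod_restrict, ae_restrict_iff' (measurableSet_Icc.prod measurableSet_Icc)]
    refine .of_forall fun p hp => ?_
    rw [Function.uncurry_apply_pair, norm_mul]
    have hα : ‖p.2‖ ≤ 1 := by simpa [abs_le] using ⟨by linarith [hp.2.1], hp.2.2⟩
    exact (mul_le_of_le_one_left (norm_nonneg _) hα).trans (hfC _)
  have inner (α : ℝ) : ∫ β in Icc (0:ℝ) 1, α * f (α * β * c + y)
      = c⁻¹ * (F (c * α + y) - F y) := by
    rcases eq_or_ne α 0 with rfl | hα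
    · simp
    simp_rw [integral_const_mul,
      show ∀ β, α * β * c + y = α * c * β + y from fun β => by ring,
      integral_Icc_zero_one_comp_mul_add f (mul_ne_zero hα hc), hFf]
    field_simp
  rw [sigma, integral_integral_swap hint]
  simp_rw [inner]
  rw [integral_const_mul, integral_Icc_zero_one_comp_mul_add (fun u => F u - F y) hc,
    show c + y = x by ring]
  field_simp

lemma integral_indicator_Icc_one {l h : ℝ} (hlh : l ≤ h) (a b : ℝ) :
    ∫ u in a..b, (Icc l h).indicator (fun _ => (1:ℝ)) u = clamp l h b - clamp l h a := by
  wlog hab : a ≤ b generalizing a b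
  · rw [intervalIntegral.integral_symm, this b a (le_of_not_ge hab), neg_sub]
  rw [intervalIntegral.integral_of_le hab, setIntegral_indicator measurableSet_Icc,
    setIntegral_const, smul_eq_mul, mul_one, measureReal_def,
    measure_congr ((ae_eq_refl (Ioc a b)).inter (Ioc_ae_eq_Icc (μ := volume)).symm),
    Ioc_inter_Ioc, Real.volume_Ioc, ENNReal.toReal_ofReal']
  simp only [clamp, min_def, max_def]
  split_ifs <;> linarith

lemma hasDerivAt_sq_max_zero (u : ℝ) :
    HasDerivAt (fun v : ℝ => max v 0 ^ 2) (2 * max u 0) u := by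
  rcases lt_trichotomy u 0 with hu | rfl | hu
  · rw [max_eq_right hu.le, mul_zero]
    refine (hasDerivAt_const u (0:ℝ)).congr_of_eventuallyEq ?_
    filter_upwards [eventually_lt_nhds hu] with v hv
    simp [max_eq_right hv.le]
  · rw [← hasDerivWithinAt_univ, ← Iic_union_Ici (a := (0:ℝ))]
    have hneg : HasDerivWithinAt (fun v : ℝ => max v 0 ^ 2) 0 (Iic 0) 0 :=
      (hasDerivWithinAt_const 0 (Iic 0) (0:ℝ)).congr
        (fun v hv => by simp [max_eq_right (mem_Iic.mp hv)]) (by simp)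
    have hpos : HasDerivWithinAt (fun v : ℝ => max v 0 ^ 2) 0 (Ici 0) 0 :=
      ((hasDerivAt_pow 2 (0:ℝ)).hasDerivWithinAt.congr
        (fun v hv => by simp [max_eq_left (mem_Ici.mp hv)]) (by simp)).congr_deriv (by simp)
    simpa using hneg.union hpos
  · rw [max_eq_left hu.le]
    refine ((hasDerivAt_pow 2 u).congr_deriv (by ring)).congr_of_eventuallyEq ?_
    filter_upwards [eventually_gt_nhds hu] with v hv
    simp [max_eq_left hv.le]

lemma sq_sub_clamp {l h : ℝ} (hlh : l ≤ h) (u : ℝ) :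
    (u - clamp l h u) ^ 2 = max (u - h) 0 ^ 2 + max (l - u) 0 ^ 2 := by
  simp only [clamp, min_def, max_def]
  split_ifs <;> nlinarith

lemma hasDerivAt_sq_sub_clamp {l h : ℝ} (hlh : l ≤ h) (u : ℝ) :
    HasDerivAt (fun v => (v - clamp l h v) ^ 2) (2 * (u - clamp l h u)) u := by
  have hh := (hasDerivAt_sq_max_zero (u - h)).comp u ((hasDerivAt_id u).sub_const h)
  have hl := (hasDerivAt_sq_max_zero (l - u)).comp u ((hasDerivAt_id u).const_sub l)
  simp_rw [sq_sub_clamp hlh]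
  refine (hh.add hl).congr_deriv ?_
  simp only [clamp, min_def, max_def]
  split_ifs <;> linarith

lemma integral_clamp_sub {l h : ℝ} (hlh : l ≤ h) (a b : ℝ) :
    ∫ u in a..b, (clamp l h u - clamp l h a)
      = (clamp l h b - clamp l h a) * (2 * b - clamp l h b - clamp l h a) / 2 := by
  have hΦ (u : ℝ) : HasDerivAt (fun v => (v ^ 2 - (v - clamp l h v) ^ 2) / 2 - v * clamp l h a)
      (clamp l h u - clamp l h a) u := by
    refine ((((hasDerivAt_pow 2 u).sub (hasDerivAt_sq_sub_clamp hlh u)).div_const 2).sub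
      ((hasDerivAt_id u).mul_const _)).congr_deriv ?_
    simp only [Nat.cast_ofNat, Nat.add_one_sub_one, pow_one, one_mul]
    ring
  rw [intervalIntegral.integral_eq_sub_of_hasDerivAt (fun u _ => hΦ u)
    (((continuous_clamp l h).sub continuous_const :
      Continuous fun u => clamp l h u - clamp l h a).intervalIntegrable a b)]
  ring

theorem stmt1_general (n : ℝ) (hn : 1 ≤ n) (x y : ℝ) :
    (x - y) ^ 2 *
        ∫ β in Set.Icc (0:ℝ) 1, ∫ α in Set.Icc (0:ℝ) 1,
          α * (Set.indicator (Set.Icc n (2 * n)) (fun _ => (1:ℝ))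
                (α * β * (x - y) + y))
      = (1 / 2) * (max (min x (2 * n)) n - max (min y (2 * n)) n) *
          (2 * x - max (min x (2 * n)) n - max (min y (2 * n)) n) := by
  have hlh : n ≤ 2 * n := by linarith
  have key := sq_mul_sigma_eq_integral_sub (measurable_const.indicator measurableSet_Icc)
    (fun u => (norm_indicator_le_norm_self _ u).trans norm_one.le)
    (integral_indicator_Icc_one hlh) x y
  rw [integral_clamp_sub hlh] at key
  simp only [sigma, clamp] at key
  rw [key]
  ring

theorem stmt1 (n : ℝ) (hn : 1 ≤ n) (x y : ℝ) (hx : 0 ≤ x) (hy : 0 ≤ y) :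
    (x - y) ^ 2 *
        ∫ β in Set.Icc (0:ℝ) 1, ∫ α in Set.Icc (0:ℝ) 1,
          α * (Set.indicator (Set.Icc n (2 * n)) (fun _ => (1:ℝ))
                (α * β * (x - y) + y))
      = (1 / 2) * (max (min x (2 * n)) n - max (min y (2 * n)) n) *
          (2 * x - max (min x (2 * n)) n - max (min y (2 * n)) n) :=
  stmt1_general n hn x y
end
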